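/- Let f ∈ k_∞ − k and let M = ((r, s), (t, u)) ∈ GL₂(A), acting on k_∞ by M(f) = (rf + s)/(tf + u). Then for all sufficiently small ε ∈ (0,1), the map λ ↦ t·λ^⊥ + u·λ is an 𝔽_q-linear bijection from Λ_ε(f) onto Λ_{ε'}(M(f)), where ε' = ε/|tf + u|. -/

import Mathlib

open scoped Classical
open Filter Topology
set_option linter.unusedSectionVars false
set_option maxHeartbeats 1000000

noncomputable section

namespace QuantumJ

variable (Fq : Type) [Field Fq] [Fintype Fq]

/-- `k_∞ = 𝔽_q((1/T))`, modeled as the field of Laurent series in `X = 1/T`. -/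
abbrev Kinf := LaurentSeries Fq

/-- The element `T = X⁻¹` of `k_∞`. -/
def Tinf : Kinf Fq := HahnSeries.single (-1 : ℤ) (1 : Fq)

/-- The absolute value `|f| = q^{deg_T f} = q^{-ord_X f}`. -/
def av (x : Kinf Fq) : ℝ :=
  if x = 0 then 0 else (Fintype.card Fq : ℝ) ^ (-(HahnSeries.order x))

/-- The inclusion of `A = 𝔽_q[T]` into `k_∞`. -/
def toK (a : Polynomial Fq) : Kinf Fq := Polynomial.aeval (Tinf Fq) a

/-- Membership in `k = 𝔽_q(T) ⊂ k_∞`. -/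
def IsRational (x : Kinf Fq) : Prop :=
  ∃ a b : Polynomial Fq, b ≠ 0 ∧ toK Fq b * x = toK Fq a

/-- `‖x‖ = min_{a ∈ A} |x - a|`, the distance from `x` to the nearest polynomial in `T`. -/
def dA (x : Kinf Fq) : ℝ :=
  sInf {r : ℝ | ∃ a : Polynomial Fq, r = av Fq (x - toK Fq a)}

/-- `Λ_ε(f) = {λ ∈ A : ‖λ f‖ < ε}`, viewed inside `A = 𝔽_q[T]`. -/
def Lam (f : Kinf Fq) (ε : ℝ) : Set (Polynomial Fq) :=
  {l | dA Fq (toK Fq l * f) < ε}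

/-- The `ε`-zeta function `ζ_{f,ε}(n) = Σ_{0 ≠ λ ∈ Λ_ε(f) monic} λ^{-n}`. -/
def zetaE (f : Kinf Fq) (ε : ℝ) (n : ℕ) : Kinf Fq :=
  ∑' l : {l : Polynomial Fq // l ∈ Lam Fq f ε ∧ l.Monic}, ((toK Fq l.1)⁻¹) ^ n

/-- The zeta function of `A`: `ζ_A(n) = Σ_{a monic} a^{-n}`. -/
def zetaA (n : ℕ) : Kinf Fq :=
  ∑' a : {a : Polynomial Fq // a.Monic}, ((toK Fq a.1)⁻¹) ^ n

/-- `Δ_ε(f) = -(T^{q²} - T) ζ_{f,ε}(q²-1) + (T^q - T)^q ζ_{f,ε}(q-1)^{q+1}`. -/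
def DeltaE (f : Kinf Fq) (ε : ℝ) : Kinf Fq :=
  -((Tinf Fq) ^ ((Fintype.card Fq) ^ 2) - Tinf Fq) * zetaE Fq f ε ((Fintype.card Fq) ^ 2 - 1)
    + ((Tinf Fq) ^ (Fintype.card Fq) - Tinf Fq) ^ (Fintype.card Fq)
        * (zetaE Fq f ε (Fintype.card Fq - 1)) ^ (Fintype.card Fq + 1)

/-- `g_ε(f) = -(T^q - T) ζ_{f,ε}(q-1)`. -/
def gE (f : Kinf Fq) (ε : ℝ) : Kinf Fq :=
  -((Tinf Fq) ^ (Fintype.card Fq) - Tinf Fq) * zetaE Fq f ε (Fintype.card Fq - 1)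

/-- The `ε`-modular invariant `j_ε(f) = g_ε(f)^{q+1}/Δ_ε(f) ∈ k_∞ ∪ {∞}`,
with `j_ε(f) = ∞` when `Δ_ε(f) = 0`. -/
def jE (f : Kinf Fq) (ε : ℝ) : OnePoint (Kinf Fq) :=
  if DeltaE Fq f ε = 0 then OnePoint.infty
  else ((gE Fq f ε ^ (Fintype.card Fq + 1) / DeltaE Fq f ε : Kinf Fq) : OnePoint (Kinf Fq))

/-- The quantum modular invariant `j^qt(f)`: the set of limit points in `k_∞ ∪ {∞}`
of `j_{ε_i}(f)` along sequences `ε_i → 0`, `ε_i > 0`. -/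
def jqt (f : Kinf Fq) : Set (OnePoint (Kinf Fq)) :=
  {ξ | ∃ e : ℕ → ℝ, (∀ i, 0 < e i) ∧ Tendsto e atTop (𝓝 0) ∧
    Tendsto (fun i => jE Fq f (e i)) atTop (𝓝 ξ)}

lemma qR_gt_one : (1:ℝ) < (Fintype.card Fq : ℝ) := by exact_mod_cast Fintype.one_lt_card
lemma qR_pos : (0:ℝ) < (Fintype.card Fq : ℝ) := lt_trans one_pos (qR_gt_one Fq)

lemma av_zero : av Fq 0 = 0 := if_pos rfl
lemma av_of_ne {x : Kinf Fq} (hx : x ≠ 0) :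
    av Fq x = (Fintype.card Fq : ℝ) ^ (-(HahnSeries.order x)) := if_neg hx
lemma av_nonneg (x : Kinf Fq) : 0 ≤ av Fq x := by
  unfold av; split
  · exact le_refl 0
  · exact le_of_lt (zpow_pos (qR_pos Fq) _)
lemma av_pos {x : Kinf Fq} (hx : x ≠ 0) : 0 < av Fq x := by
  rw [av_of_ne Fq hx]; exact zpow_pos (qR_pos Fq) _
lemma av_eq_zero {x : Kinf Fq} (h : av Fq x = 0) : x = 0 := by
  by_contra hx; exact absurd h (ne_of_gt (av_pos Fq hx))

lemma av_mul (x y : Kinf Fq) : av Fq (x * y) = av Fq x * av Fq y := by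
  by_cases hx : x = 0; · simp [hx, av_zero]
  by_cases hy : y = 0; · simp [hy, av_zero]
  rw [av_of_ne Fq (mul_ne_zero hx hy), av_of_ne Fq hx, av_of_ne Fq hy,
    HahnSeries.order_mul hx hy, neg_add, zpow_add₀ (ne_of_gt (qR_pos Fq))]

lemma av_neg (x : Kinf Fq) : av Fq (-x) = av Fq x := by
  by_cases hx : x = 0; · simp [hx]
  rw [av_of_ne Fq (neg_ne_zero.2 hx), av_of_ne Fq hx, HahnSeries.order_neg]

lemma av_add_le (x y : Kinf Fq) : av Fq (x + y) ≤ max (av Fq x) (av Fq y) := by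
  by_cases hxy : x + y = 0
  · rw [hxy, av_zero]; exact le_max_of_le_left (av_nonneg Fq x)
  by_cases hx : x = 0; · simp [hx]
  by_cases hy : y = 0; · simp [hy]
  have hmin := HahnSeries.min_order_le_order_add hxy
  rw [av_of_ne Fq hxy, av_of_ne Fq hx, av_of_ne Fq hy]
  rcases le_total (HahnSeries.order x) (HahnSeries.order y) with h | h
  · refine le_max_of_le_left (zpow_le_zpow_right₀ (le_of_lt (qR_gt_one Fq)) ?_)
    have : HahnSeries.order x ≤ (x + y).order := le_trans (by simp [min_eq_left h]) hmin
    omega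
  · refine le_max_of_le_right (zpow_le_zpow_right₀ (le_of_lt (qR_gt_one Fq)) ?_)
    have : HahnSeries.order y ≤ (x + y).order := le_trans (by simp [min_eq_right h]) hmin
    omega

lemma av_add_eq {x y : Kinf Fq} (h : av Fq x < av Fq y) : av Fq (x + y) = av Fq y := by
  refine le_antisymm (le_trans (av_add_le Fq x y) (by rw [max_eq_right (le_of_lt h)])) ?_
  have h2 : av Fq y ≤ max (av Fq (x + y)) (av Fq x) := by
    have := av_add_le Fq (x + y) (-x)
    rw [av_neg] at this
    simpa using this
  rcases max_cases (av Fq (x + y)) (av Fq x) with ⟨he, _⟩ | ⟨he, _⟩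
  · rw [he] at h2; exact h2
  · rw [he] at h2; linarith

lemma av_inv (x : Kinf Fq) : av Fq x⁻¹ = (av Fq x)⁻¹ := by
  by_cases hx : x = 0; · simp [hx, av_zero]
  have h1 : av Fq x * av Fq x⁻¹ = 1 := by
    rw [← av_mul, mul_inv_cancel₀ hx]
    have : (1 : Kinf Fq) ≠ 0 := one_ne_zero
    rw [av_of_ne Fq this]
    simp [HahnSeries.order_one]
  exact eq_inv_of_mul_eq_one_left (by rw [mul_comm]; exact h1)

lemma av_div (x y : Kinf Fq) : av Fq (x / y) = av Fq x / av Fq y := by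
  rw [div_eq_mul_inv, av_mul, av_inv, div_eq_mul_inv]

lemma toK_add (a b : Polynomial Fq) : toK Fq (a + b) = toK Fq a + toK Fq b := map_add _ _ _
lemma toK_mul (a b : Polynomial Fq) : toK Fq (a * b) = toK Fq a * toK Fq b := map_mul _ _ _
lemma toK_sub (a b : Polynomial Fq) : toK Fq (a - b) = toK Fq a - toK Fq b := map_sub _ _ _
lemma toK_neg (a : Polynomial Fq) : toK Fq (-a) = -toK Fq a := map_neg _ _
lemma toK_zero : toK Fq 0 = 0 := map_zero _
lemma toK_one : toK Fq 1 = 1 := map_one _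
lemma algebraMap_eq_single (c : Fq) :
    (algebraMap Fq (Kinf Fq)) c = HahnSeries.single (0:ℤ) c := by
  rw [HahnSeries.algebraMap_apply', PowerSeries.algebraMap_apply, Algebra.algebraMap_self_apply,
    HahnSeries.ofPowerSeries_C, HahnSeries.C_apply]

lemma toK_C (c : Fq) : toK Fq (Polynomial.C c) = HahnSeries.single (0:ℤ) c := by
  rw [toK, Polynomial.aeval_C, algebraMap_eq_single]

lemma toK_smul (c : Fq) (a : Polynomial Fq) : toK Fq (c • a) = c • toK Fq a := by
  rw [Polynomial.smul_eq_C_mul, toK_mul, toK_C, HahnSeries.single_zero_mul_eq_smul]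

lemma Tinf_pow (m : ℕ) : (Tinf Fq) ^ m = HahnSeries.single (-(m : ℤ)) (1 : Fq) := by
  rw [Tinf, HahnSeries.single_pow]
  simp

lemma toK_coeff (a : Polynomial Fq) (n : ℤ) :
    (toK Fq a).coeff n = if n ≤ 0 then a.coeff (-n).toNat else 0 := by
  induction a using Polynomial.induction_on' with
  | add p q hp hq =>
      rw [toK_add, HahnSeries.coeff_add, hp, hq, Polynomial.coeff_add]
      split <;> simp
  | monomial m c =>
      have h1 : toK Fq (Polynomial.monomial m c) = HahnSeries.single (-(m : ℤ)) c := by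
        rw [toK, Polynomial.aeval_monomial, Tinf_pow]
        rw [algebraMap_eq_single, HahnSeries.single_mul_single, zero_add, mul_one]
      rw [h1, HahnSeries.coeff_single, Polynomial.coeff_monomial]
      split_ifs <;> first | rfl | omega

lemma toK_injective : Function.Injective (toK Fq) := by
  intro a b h
  ext k
  have := congrArg (fun z => HahnSeries.coeff z (-(k : ℤ))) h
  simp only [toK_coeff, neg_nonpos, Int.natCast_nonneg, if_pos, neg_neg,
    Int.toNat_natCast] at this
  exact this

lemma toK_ne_zero {a : Polynomial Fq} (ha : a ≠ 0) : toK Fq a ≠ 0 := by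
  intro h
  exact ha (toK_injective Fq (by rw [h, toK_zero]))

lemma order_toK_nonpos {a : Polynomial Fq} (ha : a ≠ 0) : (toK Fq a).order ≤ 0 := by
  by_contra h
  push_neg at h
  have h2 := HahnSeries.coeff_order_eq_zero.not.mpr (toK_ne_zero Fq ha)
  rw [toK_coeff, if_neg (by omega)] at h2
  exact h2 rfl

lemma one_le_av_toK {a : Polynomial Fq} (ha : a ≠ 0) : 1 ≤ av Fq (toK Fq a) := by
  rw [av_of_ne Fq (toK_ne_zero Fq ha)]
  calc (1:ℝ) = (Fintype.card Fq : ℝ) ^ (0:ℤ) := by simp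
  _ ≤ _ := zpow_le_zpow_right₀ (le_of_lt (qR_gt_one Fq)) (by have := order_toK_nonpos Fq ha; omega)

lemma av_toK_unit {a : Polynomial Fq} (ha : IsUnit a) : av Fq (toK Fq a) = 1 := by
  obtain ⟨b, hb⟩ := ha.exists_right_inv
  have h1 : av Fq (toK Fq a) * av Fq (toK Fq b) = 1 := by
    rw [← av_mul, ← toK_mul, hb, toK_one, av_of_ne Fq one_ne_zero]
    simp [HahnSeries.order_one]
  have ha0 : a ≠ 0 := by rintro rfl; simp at hb
  have hb0 : b ≠ 0 := by rintro rfl; simp at hb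
  nlinarith [one_le_av_toK Fq ha0, one_le_av_toK Fq hb0]

lemma av_smul (c : Fq) (hc : c ≠ 0) (x : Kinf Fq) : av Fq (c • x) = av Fq x := by
  rw [show c • x = HahnSeries.single (0:ℤ) c * x from (HahnSeries.single_zero_mul_eq_smul).symm,
    av_mul, av_of_ne Fq (HahnSeries.single_ne_zero hc), HahnSeries.order_single hc]
  simp

def intpart (x : Kinf Fq) : Polynomial Fq :=
  ∑ n ∈ Finset.Icc x.order 0, Polynomial.C (x.coeff n) * Polynomial.X ^ (-n).toNat

lemma toK_intpart_coeff (x : Kinf Fq) {n : ℤ} (hn : n ≤ 0) :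
    (toK Fq (intpart Fq x)).coeff n = x.coeff n := by
  rw [toK_coeff, if_pos hn, intpart, Polynomial.finset_sum_coeff]
  simp only [Polynomial.coeff_C_mul, Polynomial.coeff_X_pow]
  by_cases hmem : n ∈ Finset.Icc x.order 0
  · rw [Finset.sum_eq_single_of_mem n hmem]
    · rw [if_pos (by omega), mul_one]
    · intro m hm hmn
      rw [if_neg (by simp at hm; omega), mul_zero]
  · rw [Finset.sum_eq_zero, eq_comm]
    · apply HahnSeries.coeff_eq_zero_of_lt_order
      simp at hmem; omega
    · intro m hm
      rw [if_neg (by simp at hm hmem; omega), mul_zero]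

def frac (x : Kinf Fq) : Kinf Fq := x - toK Fq (intpart Fq x)

lemma frac_coeff {x : Kinf Fq} {n : ℤ} (hn : n ≤ 0) : (frac Fq x).coeff n = 0 := by
  rw [frac, HahnSeries.coeff_sub, toK_intpart_coeff Fq x hn, sub_self]

lemma one_le_order_frac {x : Kinf Fq} (h : frac Fq x ≠ 0) : 1 ≤ (frac Fq x).order := by
  by_contra hlt
  push_neg at hlt
  exact (HahnSeries.coeff_order_eq_zero.not.mpr h) (frac_coeff Fq (by omega))

lemma av_frac_lt_one (x : Kinf Fq) : av Fq (frac Fq x) < 1 := by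
  by_cases h : frac Fq x = 0
  · rw [h, av_zero]; norm_num
  · rw [av_of_ne Fq h]
    have h1 := one_le_order_frac Fq h
    calc (Fintype.card Fq : ℝ) ^ (-(frac Fq x).order) ≤ (Fintype.card Fq : ℝ) ^ (-1 : ℤ) :=
          zpow_le_zpow_right₀ (le_of_lt (qR_gt_one Fq)) (by omega)
      _ < 1 := by
          rw [zpow_neg_one]
          exact inv_lt_one_of_one_lt₀ (qR_gt_one Fq)

lemma av_frac_le {x : Kinf Fq} (a : Polynomial Fq) :
    av Fq (frac Fq x) ≤ av Fq (x - toK Fq a) := by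
  by_cases ha : a = intpart Fq x
  · rw [ha]; exact le_of_eq rfl
  · have h1 : x - toK Fq a = frac Fq x + toK Fq (intpart Fq x - a) := by
      rw [frac, toK_sub]; ring
    have h2 : 1 ≤ av Fq (toK Fq (intpart Fq x - a)) :=
      one_le_av_toK Fq (sub_ne_zero.2 fun hh => ha hh.symm)
    rw [h1, av_add_eq Fq (lt_of_lt_of_le (av_frac_lt_one Fq x) h2)]
    exact le_trans (le_of_lt (av_frac_lt_one Fq x)) h2

lemma dA_eq_frac (x : Kinf Fq) :
    sInf {r : ℝ | ∃ a : Polynomial Fq, r = av Fq (x - toK Fq a)} = av Fq (frac Fq x) := by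
  refine IsLeast.csInf_eq ⟨⟨intpart Fq x, rfl⟩, ?_⟩
  rintro rr ⟨a, rfl⟩
  exact av_frac_le Fq a

lemma intpart_unique {x : Kinf Fq} {a : Polynomial Fq} (h : av Fq (x - toK Fq a) < 1) :
    a = intpart Fq x := by
  by_contra ha
  have h1 : toK Fq (intpart Fq x - a) = (x - toK Fq a) - frac Fq x := by
    rw [frac, toK_sub]; ring
  have h2 : av Fq (toK Fq (intpart Fq x - a)) ≤ max (av Fq (x - toK Fq a)) (av Fq (frac Fq x)) := by
    rw [h1, sub_eq_add_neg]
    exact le_trans (av_add_le Fq _ _) (by rw [av_neg])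
  have h3 := one_le_av_toK Fq (sub_ne_zero.2 fun hh => ha hh.symm)
  have h4 := av_frac_lt_one Fq x
  rcases max_cases (av Fq (x - toK Fq a)) (av Fq (frac Fq x)) with ⟨he, _⟩ | ⟨he, _⟩ <;>
    rw [he] at h2 <;> linarith

lemma intpart_add (x y : Kinf Fq) :
    intpart Fq (x + y) = intpart Fq x + intpart Fq y := by
  refine (intpart_unique Fq ?_).symm
  have h1 : x + y - toK Fq (intpart Fq x + intpart Fq y) = frac Fq x + frac Fq y := by
    rw [toK_add, frac, frac]; ring
  rw [h1]
  exact lt_of_le_of_lt (av_add_le Fq _ _)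
    (max_lt (av_frac_lt_one Fq x) (av_frac_lt_one Fq y))

lemma intpart_zero : intpart Fq (0 : Kinf Fq) = 0 := by
  refine (intpart_unique Fq ?_).symm
  rw [toK_zero, sub_zero, av_zero]; norm_num

lemma intpart_smul (c : Fq) (x : Kinf Fq) : intpart Fq (c • x) = c • intpart Fq x := by
  by_cases hc : c = 0
  · rw [hc, zero_smul, zero_smul, intpart_zero]
  refine (intpart_unique Fq ?_).symm
  have h1 : c • x - toK Fq (c • intpart Fq x) = c • frac Fq x := by
    rw [toK_smul, frac, smul_sub]
  rw [h1, av_smul Fq c hc]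
  exact av_frac_lt_one Fq x

lemma intpart_neg (x : Kinf Fq) : intpart Fq (-x) = -intpart Fq x := by
  have h := intpart_smul Fq (-1 : Fq) x
  rw [show ((-1 : Fq) • x) = -x from neg_one_smul Fq x,
    show ((-1 : Fq) • intpart Fq x) = -intpart Fq x from neg_one_smul Fq (intpart Fq x)] at h
  exact h

lemma intpart_sub (x y : Kinf Fq) :
    intpart Fq (x - y) = intpart Fq x - intpart Fq y := by
  rw [sub_eq_add_neg, sub_eq_add_neg, intpart_add, intpart_neg]

lemma dA_eq (x : Kinf Fq) : dA Fq x = av Fq (frac Fq x) := dA_eq_frac Fq x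

lemma dA_le (x : Kinf Fq) (a : Polynomial Fq) : dA Fq x ≤ av Fq (x - toK Fq a) := by
  rw [dA_eq]; exact av_frac_le Fq a

lemma dA_lt_one (x : Kinf Fq) : dA Fq x < 1 := by
  rw [dA_eq]; exact av_frac_lt_one Fq x


/-- for `M = ((r,s),(t,u)) ∈ GL₂(A)` acting by `M(f) = (rf+s)/(tf+u)` and
irrational `f`, for all sufficiently small `ε ∈ (0,1)` the map `λ ↦ t·λ^⊥ + u·λ` is an
`𝔽_q`-linear bijection from `Λ_ε(f)` onto `Λ_{ε'}(M(f))` with `ε' = ε/|tf+u|`.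
Here `perp` is a function realizing the nearest polynomial (the `f`-dual). -/
theorem Lam_GL2_equivariance (f : Kinf Fq) (hf : ¬ IsRational Fq f)
    (perp : Polynomial Fq → Polynomial Fq)
    (hperp : ∀ l : Polynomial Fq,
      av Fq (toK Fq l * f - toK Fq (perp l)) = dA Fq (toK Fq l * f))
    (r s t u : Polynomial Fq) (hdet : IsUnit (r * u - s * t)) :
    ∃ ε₁ ∈ Set.Ioo (0 : ℝ) 1, ∀ ε : ℝ, 0 < ε → ε < ε₁ →
      (∀ l ∈ Lam Fq f ε, ∀ m ∈ Lam Fq f ε,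
        t * perp (l + m) + u * (l + m) = (t * perp l + u * l) + (t * perp m + u * m)) ∧
      (∀ c : Fq, ∀ l ∈ Lam Fq f ε,
        t * perp (c • l) + u * (c • l) = c • (t * perp l + u * l)) ∧
      Set.BijOn (fun l => t * perp l + u * l) (Lam Fq f ε)
        (Lam Fq ((toK Fq r * f + toK Fq s) / (toK Fq t * f + toK Fq u))
          (ε / av Fq (toK Fq t * f + toK Fq u))) := by
  classical
  have hperp' : ∀ l, perp l = intpart Fq (toK Fq l * f) := by
    intro l
    refine intpart_unique Fq ?_
    rw [hperp l]
    exact dA_lt_one Fq _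
  set D : Kinf Fq := toK Fq t * f + toK Fq u with hDdef
  have hDne : D ≠ 0 := by
    intro h0
    by_cases ht : t = 0
    · have hu : u ≠ 0 := by
        intro hu; rw [ht, hu] at hdet; simp at hdet
      apply toK_ne_zero Fq hu
      rw [hDdef, ht, toK_zero, zero_mul, zero_add] at h0
      exact h0
    · rw [hDdef] at h0
      exact hf ⟨-u, t, ht, by rw [toK_neg]; linear_combination h0⟩
  have haD : 0 < av Fq D := av_pos Fq hDne
  set aT := av Fq (toK Fq t) with haTdef
  have haT0 : 0 ≤ aT := av_nonneg Fq _
  refine ⟨min (1/2) (av Fq D / (aT + 1)),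
    ⟨lt_min (by norm_num) (div_pos haD (by linarith)),
      lt_of_le_of_lt (min_le_left _ _) (by norm_num)⟩, ?_⟩
  intro ε hε hε1
  have hε_lt_one : ε < 1 :=
    lt_of_lt_of_le (lt_of_lt_of_le hε1 (min_le_left _ _)) (by norm_num)
  have hεT : aT * ε < av Fq D := by
    have h2 : ε < av Fq D / (aT + 1) := lt_of_lt_of_le hε1 (min_le_right _ _)
    rw [lt_div_iff₀ (by linarith)] at h2
    nlinarith
  have hadd : ∀ l m : Polynomial Fq, perp (l + m) = perp l + perp m := by
    intro l m
    rw [hperp', hperp', hperp', toK_add, add_mul, intpart_add]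
  have hsub : ∀ l m : Polynomial Fq, perp (l - m) = perp l - perp m := by
    intro l m
    rw [hperp', hperp', hperp', toK_sub, sub_mul, intpart_sub]
  have hsmul : ∀ (c : Fq) (l : Polynomial Fq), perp (c • l) = c • perp l := by
    intro c l
    rw [hperp', hperp', toK_smul]
    rw [show (c • toK Fq l) * f = c • (toK Fq l * f) by
      rw [← HahnSeries.single_zero_mul_eq_smul, ← HahnSeries.single_zero_mul_eq_smul, mul_assoc]]
    rw [intpart_smul]
  refine ⟨fun l _ m _ => by rw [hadd l m]; ring,
    fun c l _ => by rw [hsmul c l, mul_smul_comm, mul_smul_comm, ← smul_add], ?_, ?_, ?_⟩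
  · -- MapsTo
    intro l hl
    show dA Fq (toK Fq (t * perp l + u * l) * ((toK Fq r * f + toK Fq s) / D)) < ε / av Fq D
    have hkey : toK Fq (t * perp l + u * l) * ((toK Fq r * f + toK Fq s) / D)
        - toK Fq (r * perp l + s * l)
        = toK Fq (r * u - s * t) * (toK Fq l * f - toK Fq (perp l)) / D := by
      rw [hDdef] at hDne ⊢
      simp only [toK_add, toK_mul, toK_sub]
      field_simp
      ring
    calc dA Fq (toK Fq (t * perp l + u * l) * ((toK Fq r * f + toK Fq s) / D))
        ≤ av Fq (toK Fq (t * perp l + u * l) * ((toK Fq r * f + toK Fq s) / D)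
            - toK Fq (r * perp l + s * l)) := dA_le Fq _ _
      _ = dA Fq (toK Fq l * f) / av Fq D := by
          rw [hkey, av_div, av_mul, av_toK_unit Fq hdet, one_mul, hperp l]
      _ < ε / av Fq D := by
          apply div_lt_div_of_pos_right ?_ haD
          exact hl
  · -- InjOn
    intro l hl m hm h
    simp only at h
    by_contra hne
    have hn : l - m ≠ 0 := sub_ne_zero.2 hne
    have h0 : t * perp (l - m) + u * (l - m) = 0 := by
      rw [hsub]; linear_combination h
    have hdn : dA Fq (toK Fq (l - m) * f) < ε := by
      have hrw : toK Fq (l - m) * f - toK Fq (perp (l - m))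
          = (toK Fq l * f - toK Fq (perp l)) + -(toK Fq m * f - toK Fq (perp m)) := by
        rw [hsub, toK_sub, toK_sub]; ring
      calc dA Fq (toK Fq (l - m) * f)
          = av Fq (toK Fq (l - m) * f - toK Fq (perp (l - m))) := (hperp _).symm
        _ ≤ max (av Fq (toK Fq l * f - toK Fq (perp l)))
              (av Fq (-(toK Fq m * f - toK Fq (perp m)))) := by
            rw [hrw]; exact av_add_le Fq _ _
        _ < ε := by
            rw [av_neg, hperp l, hperp m]
            exact max_lt hl hm
    have h0K : toK Fq t * toK Fq (perp (l - m)) + toK Fq u * toK Fq (l - m) = 0 := by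
      rw [← toK_mul, ← toK_mul, ← toK_add, h0, toK_zero]
    have hND : toK Fq (l - m) * D
        = toK Fq t * (toK Fq (l - m) * f - toK Fq (perp (l - m))) := by
      rw [hDdef]; linear_combination h0K
    have hcontr : av Fq (toK Fq (l - m)) * av Fq D = aT * dA Fq (toK Fq (l - m) * f) := by
      rw [← av_mul, hND, av_mul, hperp, haTdef]
    have h7 : av Fq D ≤ av Fq (toK Fq (l - m)) * av Fq D :=
      le_mul_of_one_le_left (le_of_lt haD) (one_le_av_toK Fq hn)
    have h8 : aT * dA Fq (toK Fq (l - m) * f) ≤ aT * ε :=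
      mul_le_mul_of_nonneg_left (le_of_lt hdn) haT0
    linarith
  · -- SurjOn
    intro μ hμ
    obtain ⟨v, hv⟩ := hdet.exists_right_inv
    have hμ' : dA Fq (toK Fq μ * ((toK Fq r * f + toK Fq s) / D)) < ε / av Fq D := hμ
    set m0 := intpart Fq (toK Fq μ * ((toK Fq r * f + toK Fq s) / D)) with hm0
    set lam := v * (r * μ - t * m0) with hlam
    have hid : toK Fq lam * f - toK Fq (v * (u * m0 - s * μ))
        = toK Fq v * D * (toK Fq μ * ((toK Fq r * f + toK Fq s) / D) - toK Fq m0) := by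
      rw [hlam, hDdef] at *
      simp only [toK_add, toK_mul, toK_sub]
      field_simp
      ring
    have hvunit : IsUnit v :=
      IsUnit.of_mul_eq_one (r * u - s * t) (by linear_combination hv)
    have havlam : av Fq (toK Fq lam * f - toK Fq (v * (u * m0 - s * μ))) < ε := by
      rw [hid, av_mul, av_mul, av_toK_unit Fq hvunit, one_mul]
      have hdArw : av Fq (toK Fq μ * ((toK Fq r * f + toK Fq s) / D) - toK Fq m0)
          = dA Fq (toK Fq μ * ((toK Fq r * f + toK Fq s) / D)) := by
        rw [hm0, dA_eq, frac]
      rw [hdArw]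
      calc av Fq D * dA Fq (toK Fq μ * ((toK Fq r * f + toK Fq s) / D))
          < av Fq D * (ε / av Fq D) := by
            exact mul_lt_mul_of_pos_left hμ' haD
        _ = ε := by field_simp
    have hlamLam : lam ∈ Lam Fq f ε :=
      lt_of_le_of_lt (dA_le Fq _ (v * (u * m0 - s * μ))) havlam
    have hperplam : perp lam = v * (u * m0 - s * μ) := by
      rw [hperp']
      exact (intpart_unique Fq (lt_trans havlam hε_lt_one)).symm
    refine ⟨lam, hlamLam, ?_⟩
    show t * perp lam + u * lam = μ
    rw [hperplam, hlam]
    linear_combination μ * hv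


end QuantumJ
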